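/- arXiv:2205.07564 — 2 statements merged into one kernel-verified Lean document; each statement's English description precedes it below -/
import Mathlib

section
/- (Dirichlet's discrete version of the logarithmic integral) The quotient (∑_{n=2}^{N} 1/log n) / li(N) tends to 1 as the natural number N → ∞; that is, the discrete sum ∑_{n≤N} 1/log n is asymptotically equal to li(N). -/
open Filter MeasureTheory Set

private noncomputable def fl : ℝ → ℝ := fun t => 1 / Real.log t

private lemma fl_anti {a b : ℝ} (ha : 1 < a) : AntitoneOn fl (Set.Icc a b) := by
  intro x hx y hy hxy
  have hlx : 0 < Real.log x := Real.log_pos (lt_of_lt_of_le ha hx.1)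
  have : Real.log x ≤ Real.log y :=
    Real.log_le_log (by linarith [hx.1, ha.trans_le hx.1]) hxy
  simpa only [fl, one_div] using inv_anti₀ hlx this

private lemma fl_nonneg {t : ℝ} (ht : 1 ≤ t) : 0 ≤ fl t := by
  rcases eq_or_lt_of_le ht with h | h
  · simp [fl, ← h]
  · have := Real.log_pos h
    simp only [fl]; positivity

private lemma fl_intble {a b : ℝ} (ha : 1 < a) (hab : a ≤ b) :
    IntervalIntegrable fl volume a b := by
  apply ContinuousOn.intervalIntegrable
  rw [uIcc_of_le hab]
  apply ContinuousOn.div continuousOn_const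
  · exact Real.continuousOn_log.mono fun t ht =>
      ne_of_gt (lt_trans one_pos (lt_of_lt_of_le ha ht.1))
  · intro t ht
    exact ne_of_gt (Real.log_pos (lt_of_lt_of_le ha ht.1))

/-- `li x = li 2 + ∫_2^x fl` for `x ≥ 2`. -/
private lemma li_eq {li : ℝ → ℝ}
    (hli : ∀ x : ℝ, 1 < x →
      Filter.Tendsto
        (fun ε : ℝ =>
          (∫ t in (0:ℝ)..(1 - ε), 1 / Real.log t) + ∫ t in (1 + ε)..x, 1 / Real.log t)
        (nhdsWithin 0 (Set.Ioi 0)) (nhds (li x)))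
    {x : ℝ} (hx : 2 ≤ x) :
    li x = li 2 + ∫ t in (2:ℝ)..x, fl t := by
  have h2 := hli 2 one_lt_two
  have hx' := hli x (lt_of_lt_of_le one_lt_two hx)
  have hmem : Set.Ioo (0:ℝ) 1 ∈ nhdsWithin (0:ℝ) (Set.Ioi 0) :=
    Ioo_mem_nhdsGT_of_mem ⟨le_refl _, one_pos⟩
  have heq : ∀ᶠ ε in nhdsWithin (0:ℝ) (Set.Ioi 0),
      ((∫ t in (0:ℝ)..(1 - ε), 1 / Real.log t) + ∫ t in (1 + ε)..x, 1 / Real.log t)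
      = ((∫ t in (0:ℝ)..(1 - ε), 1 / Real.log t) + ∫ t in (1 + ε)..(2:ℝ), 1 / Real.log t)
        + ∫ t in (2:ℝ)..x, 1 / Real.log t := by
    filter_upwards [hmem] with ε hε
    have h1 : (1:ℝ) < 1 + ε := by linarith [hε.1]
    have hsplit : (∫ t in (1 + ε)..(2:ℝ), fl t) + ∫ t in (2:ℝ)..x, fl t
        = ∫ t in (1 + ε)..x, fl t :=
      intervalIntegral.integral_add_adjacent_intervals
        (fl_intble h1 (by linarith [hε.2])) (fl_intble one_lt_two hx)
    simp only [fl] at hsplit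
    linarith [hsplit]
  have h3 : Filter.Tendsto
      (fun ε : ℝ => ((∫ t in (0:ℝ)..(1 - ε), 1 / Real.log t)
        + ∫ t in (1 + ε)..(2:ℝ), 1 / Real.log t) + ∫ t in (2:ℝ)..x, 1 / Real.log t)
      (nhdsWithin 0 (Set.Ioi 0)) (nhds (li 2 + ∫ t in (2:ℝ)..x, 1 / Real.log t)) :=
    h2.add_const _
  have h4 := h3.congr' ((heq.mono fun ε h => h.symm))
  simpa only [fl] using tendsto_nhds_unique hx' h4


private lemma li_atTop {li : ℝ → ℝ}
    (hli2 : ∀ {x : ℝ}, 2 ≤ x → li x = li 2 + ∫ t in (2:ℝ)..x, fl t) :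
    Filter.Tendsto (fun N : ℕ => li N) Filter.atTop Filter.atTop := by
  have hlow : ∀ᶠ N : ℕ in atTop, li 2 + (Real.log N - Real.log 2) ≤ li N := by
    filter_upwards [eventually_ge_atTop 2] with N hN
    have hN2 : (2:ℝ) ≤ (N:ℝ) := by exact_mod_cast hN
    rw [hli2 hN2]
    have h1 : (∫ t in (2:ℝ)..(N:ℝ), 1 / t) ≤ ∫ t in (2:ℝ)..(N:ℝ), fl t := by
      apply intervalIntegral.integral_mono_on hN2
      · apply ContinuousOn.intervalIntegrable
        rw [uIcc_of_le hN2]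
        exact ContinuousOn.div continuousOn_const continuousOn_id
          fun t ht => ne_of_gt (lt_of_lt_of_le two_pos ht.1)
      · exact fl_intble one_lt_two hN2
      · intro t ht
        have ht2 : (2:ℝ) ≤ t := ht.1
        have hlt : 0 < Real.log t := Real.log_pos (by linarith)
        have hle : Real.log t ≤ t := (Real.log_le_sub_one_of_pos (by linarith)).trans
          (by linarith)
        simpa only [fl] using one_div_le_one_div_of_le hlt hle
    have h2 : (∫ t in (2:ℝ)..(N:ℝ), 1 / t) = Real.log N - Real.log 2 := by
      rw [integral_one_div (by
        intro h
        rw [uIcc_of_le hN2] at h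
        linarith [h.1])]
      rw [Real.log_div (by positivity) (by norm_num)]
    rw [← h2]
    linarith [h1]
  apply tendsto_atTop_mono' _ hlow
  have : Tendsto (fun N : ℕ => Real.log N) atTop atTop :=
    Real.tendsto_log_atTop.comp tendsto_natCast_atTop_atTop
  exact tendsto_atTop_add_const_left _ _ (tendsto_atTop_add_const_right _ _ this)

private lemma sum_ge {N : ℕ} (hN : 2 ≤ N) :
    (∫ t in (2:ℝ)..(N:ℝ), fl t) ≤ ∑ n ∈ Finset.Icc 2 N, fl n := by
  have hN2 : (2:ℝ) ≤ (N:ℝ) := by exact_mod_cast hN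
  have h1 : (∫ t in ((2:ℕ):ℝ)..((N+1:ℕ):ℝ), fl t) ≤ ∑ i ∈ Finset.Ico 2 (N+1), fl i :=
    AntitoneOn.integral_le_sum_Ico (by omega) (fl_anti (by norm_num))
  rw [Finset.Ico_add_one_right_eq_Icc] at h1
  have h2 : (∫ t in (2:ℝ)..(N:ℝ), fl t) ≤ ∫ t in ((2:ℕ):ℝ)..((N+1:ℕ):ℝ), fl t := by
    push_cast
    have hsplit : (∫ t in (2:ℝ)..(N:ℝ), fl t) + ∫ t in (N:ℝ)..((N:ℝ)+1), fl t
        = ∫ t in (2:ℝ)..((N:ℝ)+1), fl t :=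
      intervalIntegral.integral_add_adjacent_intervals (fl_intble one_lt_two hN2)
        (fl_intble (by linarith) (by linarith))
    have hpos : 0 ≤ ∫ t in (N:ℝ)..((N:ℝ)+1), fl t :=
      intervalIntegral.integral_nonneg (by linarith) fun u hu => fl_nonneg (by linarith [hu.1])
    linarith
  calc (∫ t in (2:ℝ)..(N:ℝ), fl t) ≤ _ := h2
    _ ≤ _ := h1

private lemma sum_le {N : ℕ} (hN : 2 ≤ N) :
    ∑ n ∈ Finset.Icc 2 N, fl n ≤ fl 2 + ∫ t in (2:ℝ)..(N:ℝ), fl t := by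
  have h1 : (∑ i ∈ Finset.Ico 2 N, fl (↑(i+1):ℝ)) ≤ ∫ t in ((2:ℕ):ℝ)..((N:ℕ):ℝ), fl t :=
    AntitoneOn.sum_le_integral_Ico hN (fl_anti (by norm_num))
  have h2 : ∑ n ∈ Finset.Icc 2 N, fl (n:ℝ)
      = fl ((2:ℕ):ℝ) + ∑ i ∈ Finset.Ico 2 N, fl (↑(i+1):ℝ) := by
    rw [← Finset.Ico_add_one_right_eq_Icc, Finset.sum_eq_sum_Ico_succ_bot (by omega) (fun n => fl (n:ℝ))]
    congr 1
    exact (Finset.sum_Ico_add' (fun n : ℕ => fl (n:ℝ)) 2 N 1).symm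
  rw [h2]
  push_cast
  push_cast at h1
  linarith

open Filter MeasureTheory

/-- `li` satisfies the defining principal-value property of the logarithmic integral:
for every `x > 1`, `∫_0^{1-ε} dt/log t + ∫_{1+ε}^x dt/log t → li x` as `ε → 0⁺`. -/
def IsLi (li : ℝ → ℝ) : Prop :=
  ∀ x : ℝ, 1 < x →
    Filter.Tendsto
      (fun ε : ℝ =>
        (∫ t in (0:ℝ)..(1 - ε), 1 / Real.log t) + ∫ t in (1 + ε)..x, 1 / Real.log t)
      (nhdsWithin 0 (Set.Ioi 0)) (nhds (li x))

/-- Dirichlet's discrete version of the logarithmic integral: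
`(∑_{n=2}^{N} 1 / log n) / li N → 1` as the natural number `N → ∞`. -/
theorem sum_one_div_log_asymptotic_li (li : ℝ → ℝ) (hli : IsLi li) :
    Filter.Tendsto
      (fun N : ℕ => (∑ n ∈ Finset.Icc 2 N, 1 / Real.log n) / li N)
      Filter.atTop (nhds 1) := by
  have hli2 : ∀ {x : ℝ}, 2 ≤ x → li x = li 2 + ∫ t in (2:ℝ)..x, fl t :=
    fun hx => li_eq hli hx
  have htop : Tendsto (fun N : ℕ => li N) atTop atTop :=
    li_atTop fun hx => hli2 hx
  have hbound : ∀ᶠ N : ℕ in atTop,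
      li N - li 2 ≤ (∑ n ∈ Finset.Icc 2 N, 1 / Real.log (n:ℝ)) ∧
      (∑ n ∈ Finset.Icc 2 N, 1 / Real.log (n:ℝ)) ≤ li N - li 2 + fl 2 := by
    filter_upwards [eventually_ge_atTop 2] with N hN
    have hN2 : (2:ℝ) ≤ (N:ℝ) := by exact_mod_cast hN
    have heq := hli2 hN2
    have h1 := sum_ge hN
    have h2 := sum_le hN
    simp only [fl] at h1 h2 heq ⊢
    constructor <;> linarith
  have hpos : ∀ᶠ N : ℕ in atTop, 0 < li N := htop.eventually_gt_atTop 0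
  have hlow : Tendsto (fun N : ℕ => 1 - li 2 / li N) atTop (nhds 1) := by
    have h := (tendsto_const_nhds (x := li 2) (f := atTop (α := ℕ))).div_atTop htop
    simpa using (tendsto_const_nhds (x := (1:ℝ)) (f := atTop (α := ℕ))).sub h
  have hup : Tendsto (fun N : ℕ => 1 + (fl 2 - li 2) / li N) atTop (nhds 1) := by
    have h := (tendsto_const_nhds (x := fl 2 - li 2) (f := atTop (α := ℕ))).div_atTop htop
    simpa using (tendsto_const_nhds (x := (1:ℝ)) (f := atTop (α := ℕ))).add h
  apply tendsto_of_tendsto_of_tendsto_of_le_of_le' hlow hup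
  · filter_upwards [hbound, hpos] with N h hp
    have e : 1 - li 2 / li N = (li N - li 2) / li N := by field_simp
    rw [e]
    exact div_le_div_of_nonneg_right h.1 hp.le
  · filter_upwards [hbound, hpos] with N h hp
    have e : 1 + (fl 2 - li 2) / li N = (li N - li 2 + fl 2) / li N := by
      field_simp; ring
    rw [e]
    exact div_le_div_of_nonneg_right h.2 hp.le
end

section
/- (Gauss's anticipation of Cauchy's integral theorem) Let U ⊆ ℂ be an open, simply connected set, let f : ℂ → ℂ be complex differentiable at every point of U, and let γ₀, γ₁ : [0,1] → ℂ be continuously differentiable paths whose images lie in U, with γ₀(0) = γ₁(0) and γ₀(1) = γ₁(1). Then the path integrals agree: ∫_0^1 f(γ₀(t)) · γ₀′(t) dt = ∫_0^1 f(γ₁(t)) · γ₁′(t) dt. -/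
open MeasureTheory intervalIntegral

open Set Complex


/-- An open axis-parallel square centered at `c` with half-side `δ`. -/
def csq (c : ℂ) (δ : ℝ) : Set ℂ :=
  Complex.re ⁻¹' (Set.Ioo (c.re - δ) (c.re + δ)) ∩
    Complex.im ⁻¹' (Set.Ioo (c.im - δ) (c.im + δ))

lemma mem_csq {c w : ℂ} {δ : ℝ} :
    w ∈ csq c δ ↔ |w.re - c.re| < δ ∧ |w.im - c.im| < δ := by
  simp only [csq, Set.mem_inter_iff, Set.mem_preimage, Set.mem_Ioo, abs_sub_lt_iff]
  constructor <;> intro h <;> exact ⟨by constructor <;> linarith [h.1.1, h.1.2],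
    by constructor <;> linarith [h.2.1, h.2.2]⟩

lemma csq_isOpen (c : ℂ) (δ : ℝ) : IsOpen (csq c δ) :=
  ((isOpen_Ioo).preimage Complex.continuous_re).inter
    ((isOpen_Ioo).preimage Complex.continuous_im)

lemma csq_convex (c : ℂ) (δ : ℝ) : Convex ℝ (csq c δ) := by
  have h1 : Complex.re ⁻¹' (Set.Ioo (c.re - δ) (c.re + δ))
      = Complex.reLm ⁻¹' (Set.Ioo (c.re - δ) (c.re + δ)) := rfl
  have h2 : Complex.im ⁻¹' (Set.Ioo (c.im - δ) (c.im + δ))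
      = Complex.imLm ⁻¹' (Set.Ioo (c.im - δ) (c.im + δ)) := rfl
  unfold csq
  rw [h1, h2]
  exact ((convex_Ioo _ _).linear_preimage _).inter ((convex_Ioo _ _).linear_preimage _)

lemma self_mem_csq {c : ℂ} {δ : ℝ} (hδ : 0 < δ) : c ∈ csq c δ := by
  simp [mem_csq, hδ]

lemma csq_seg_h {c : ℂ} {δ : ℝ} {a b y : ℝ} (ha : |a - c.re| < δ) (hb : |b - c.re| < δ)
    (hy : |y - c.im| < δ) : ∀ t ∈ Set.uIcc a b, (↑t + ↑y * I) ∈ csq c δ := by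
  intro t ht
  rw [Set.mem_uIcc] at ht
  rw [mem_csq]
  rw [abs_lt] at ha hb hy
  simp only [add_re, ofReal_re, mul_re, I_re, I_im, ofReal_im, add_im, mul_im]
  norm_num
  rw [abs_lt, abs_lt]
  refine ⟨⟨?_, ?_⟩, ?_, ?_⟩ <;> rcases ht with ⟨h1,h2⟩|⟨h1,h2⟩ <;> linarith

lemma csq_seg_v {c : ℂ} {δ : ℝ} {x a b : ℝ} (hx : |x - c.re| < δ) (ha : |a - c.im| < δ)
    (hb : |b - c.im| < δ) : ∀ s ∈ Set.uIcc a b, (↑x + ↑s * I) ∈ csq c δ := by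
  intro s hs
  rw [Set.mem_uIcc] at hs
  rw [mem_csq]
  rw [abs_lt] at hx ha hb
  simp only [add_re, ofReal_re, mul_re, I_re, I_im, ofReal_im, add_im, mul_im]
  norm_num
  rw [abs_lt, abs_lt]
  refine ⟨⟨?_, ?_⟩, ?_, ?_⟩ <;> rcases hs with ⟨h1,h2⟩|⟨h1,h2⟩ <;> linarith

lemma csq_intIntegrable_h {f : ℂ → ℂ} {c : ℂ} {δ : ℝ}
    (hfc : ContinuousOn f (csq c δ)) {a b y : ℝ} (ha : |a - c.re| < δ)
    (hb : |b - c.re| < δ) (hy : |y - c.im| < δ) :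
    IntervalIntegrable (fun t : ℝ => f (↑t + ↑y * I)) volume a b := by
  apply ContinuousOn.intervalIntegrable
  exact hfc.comp ((Complex.continuous_ofReal.add continuous_const).continuousOn)
    (csq_seg_h ha hb hy)

lemma csq_intIntegrable_v {f : ℂ → ℂ} {c : ℂ} {δ : ℝ}
    (hfc : ContinuousOn f (csq c δ)) {x a b : ℝ} (hx : |x - c.re| < δ)
    (ha : |a - c.im| < δ) (hb : |b - c.im| < δ) :
    IntervalIntegrable (fun s : ℝ => f (↑x + ↑s * I)) volume a b := by
  apply ContinuousOn.intervalIntegrable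
  refine hfc.comp ?_ (csq_seg_v hx ha hb)
  exact (continuous_const.add (Complex.continuous_ofReal.mul continuous_const)).continuousOn

lemma csq_diff_formula {f : ℂ → ℂ} {c : ℂ} {δ : ℝ} (hδ : 0 < δ)
    (hd : ∀ w ∈ csq c δ, DifferentiableAt ℂ f w) {z w : ℂ}
    (hz : z ∈ csq c δ) (hw : w ∈ csq c δ) :
    ((∫ t in c.re..w.re, f (↑t + ↑c.im * I)) + I * ∫ s in c.im..w.im, f (↑w.re + ↑s * I))
      - ((∫ t in c.re..z.re, f (↑t + ↑c.im * I)) + I * ∫ s in c.im..z.im, f (↑z.re + ↑s * I))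
    = (∫ t in z.re..w.re, f (↑t + ↑z.im * I)) + I * ∫ s in z.im..w.im, f (↑w.re + ↑s * I) := by
  have hfc : ContinuousOn f (csq c δ) := fun u hu => (hd u hu).continuousAt.continuousWithinAt
  rw [mem_csq] at hz hw
  have h0re : |c.re - c.re| < δ := by simpa using hδ
  have h0im : |c.im - c.im| < δ := by simpa using hδ
  have split_h : (∫ t in c.re..w.re, f (↑t + ↑c.im * I))
      = (∫ t in c.re..z.re, f (↑t + ↑c.im * I)) + ∫ t in z.re..w.re, f (↑t + ↑c.im * I) :=
    (intervalIntegral.integral_add_adjacent_intervals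
      (csq_intIntegrable_h hfc h0re hz.1 h0im) (csq_intIntegrable_h hfc hz.1 hw.1 h0im)).symm
  have split_v : (∫ s in c.im..w.im, f (↑w.re + ↑s * I))
      = (∫ s in c.im..z.im, f (↑w.re + ↑s * I)) + ∫ s in z.im..w.im, f (↑w.re + ↑s * I) :=
    (intervalIntegral.integral_add_adjacent_intervals
      (csq_intIntegrable_v hfc hw.1 h0im hz.2) (csq_intIntegrable_v hfc hw.1 hz.2 hw.2)).symm
  have hrect := Complex.integral_boundary_rect_eq_zero_of_differentiableOn f
    (↑z.re + ↑c.im * I) (↑w.re + ↑z.im * I) ?_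
  · simp only [add_re, ofReal_re, mul_re, I_re, I_im, ofReal_im, add_im, mul_im,
      smul_eq_mul] at hrect
    norm_num at hrect
    rw [split_h, split_v]
    linear_combination hrect
  · intro u hu
    rw [Complex.mem_reProdIm] at hu
    simp only [add_re, ofReal_re, mul_re, I_re, I_im, ofReal_im, add_im, mul_im] at hu
    norm_num at hu
    refine (hd u ?_).differentiableWithinAt
    rw [mem_csq]
    obtain ⟨hu1, hu2⟩ := hu
    rw [Set.mem_uIcc] at hu1 hu2
    obtain ⟨hz1, hz2⟩ := hz
    obtain ⟨hw1, hw2⟩ := hw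
    rw [abs_lt] at hz1 hz2 hw1 hw2
    constructor
    · rw [abs_lt]; rcases hu1 with ⟨h1,h2⟩|⟨h1,h2⟩ <;> constructor <;> linarith
    · rw [abs_lt]; rcases hu2 with ⟨h1,h2⟩|⟨h1,h2⟩ <;> constructor <;> linarith

set_option maxHeartbeats 1000000 in
lemma exists_primitive_csq {f : ℂ → ℂ} {c : ℂ} {δ : ℝ} (hδ : 0 < δ)
    (hd : ∀ z ∈ csq c δ, DifferentiableAt ℂ f z) :
    ∃ F : ℂ → ℂ, ∀ z ∈ csq c δ, HasDerivAt F (f z) z := by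
  have hfc : ContinuousOn f (csq c δ) := fun u hu => (hd u hu).continuousAt.continuousWithinAt
  refine ⟨fun z => (∫ t in c.re..z.re, f (↑t + ↑c.im * I))
      + I * ∫ s in c.im..z.im, f (↑z.re + ↑s * I), fun z hz => ?_⟩
  rw [hasDerivAt_iff_isLittleO, Asymptotics.isLittleO_iff]
  intro ε hε
  -- continuity of f at z
  obtain ⟨δ', hδ'pos, hδ'⟩ := Metric.continuousAt_iff.1 (hd z hz).continuousAt (ε/2)
    (by positivity)
  obtain ⟨r₀, hr₀pos, hr₀⟩ := Metric.isOpen_iff.1 (csq_isOpen c δ) z hz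
  rw [Metric.eventually_nhds_iff]
  refine ⟨min r₀ (δ'/2), by positivity, fun w hwd => ?_⟩
  have hwz : dist w z < δ' / 2 := lt_of_lt_of_le hwd (min_le_right _ _)
  have hw : w ∈ csq c δ := hr₀ (lt_of_lt_of_le hwd (min_le_left _ _))
  have key := csq_diff_formula hδ hd hz hw
  rw [mem_csq] at hz hw
  -- integrability along the two segments near z
  have habs : ‖w - z‖ = dist w z := (dist_eq_norm w z).symm
  have hre : |w.re - z.re| ≤ dist w z := by
    rw [← habs]; simpa using Complex.abs_re_le_norm (w - z)
  have him : |w.im - z.im| ≤ dist w z := by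
    rw [← habs]; simpa using Complex.abs_im_le_norm (w - z)
  have hseg_h : ∀ t ∈ Set.uIcc z.re w.re, (↑t + ↑z.im * I) ∈ csq c δ :=
    csq_seg_h hz.1 hw.1 hz.2
  have hseg_v : ∀ s ∈ Set.uIcc z.im w.im, (↑w.re + ↑s * I) ∈ csq c δ :=
    csq_seg_v hw.1 hz.2 hw.2
  have int_h : IntervalIntegrable (fun t : ℝ => f (↑t + ↑z.im * I)) volume z.re w.re :=
    csq_intIntegrable_h hfc hz.1 hw.1 hz.2
  have int_v : IntervalIntegrable (fun s : ℝ => f (↑w.re + ↑s * I)) volume z.im w.im :=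
    csq_intIntegrable_v hfc hw.1 hz.2 hw.2
  -- rewrite the difference
  have hzsplit : w - z = (↑(w.re - z.re) : ℂ) + ↑(w.im - z.im) * I := by
    apply Complex.ext <;> simp
  have e1 : (∫ t in z.re..w.re, f (↑t + ↑z.im * I))
      = (∫ t in z.re..w.re, (f (↑t + ↑z.im * I) - f z)) + ↑(w.re - z.re) * f z := by
    rw [intervalIntegral.integral_sub int_h intervalIntegrable_const,
      intervalIntegral.integral_const]
    simp [Complex.real_smul]
  have e2 : (∫ s in z.im..w.im, f (↑w.re + ↑s * I))
      = (∫ s in z.im..w.im, (f (↑w.re + ↑s * I) - f z)) + ↑(w.im - z.im) * f z := by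
    rw [intervalIntegral.integral_sub int_v intervalIntegrable_const,
      intervalIntegral.integral_const]
    simp [Complex.real_smul]
  have main : (fun z => (∫ t in c.re..z.re, f (↑t + ↑c.im * I))
        + I * ∫ s in c.im..z.im, f (↑z.re + ↑s * I)) w
      - (fun z => (∫ t in c.re..z.re, f (↑t + ↑c.im * I))
        + I * ∫ s in c.im..z.im, f (↑z.re + ↑s * I)) z
      - (w - z) • f z
      = (∫ t in z.re..w.re, (f (↑t + ↑z.im * I) - f z))
        + I * ∫ s in z.im..w.im, (f (↑w.re + ↑s * I) - f z) := by
    simp only [smul_eq_mul]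
    rw [hzsplit]
    linear_combination key + e1 + I * e2
  rw [main]
  -- norm estimates
  have bnd_h : ‖∫ t in z.re..w.re, (f (↑t + ↑z.im * I) - f z)‖ ≤ (ε/2) * |w.re - z.re| := by
    apply intervalIntegral.norm_integral_le_of_norm_le_const
    intro x hx
    have hx' : x ∈ Set.uIcc z.re w.re := Set.uIoc_subset_uIcc hx
    have hd1 : dist (↑x + ↑z.im * I) z < δ' := by
      have : dist (↑x + ↑z.im * I) z = |x - z.re| := by
        rw [Complex.dist_eq]
        have : (↑x + ↑z.im * I) - z = ((x - z.re : ℝ) : ℂ) := by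
          apply Complex.ext <;> simp
        rw [this, Complex.norm_real, Real.norm_eq_abs]
      rw [this]
      rw [Set.mem_uIcc] at hx'
      have h1 : |x - z.re| ≤ |w.re - z.re| := by
        rw [abs_le]; rw [abs_le] at *
        rcases hx' with ⟨h1,h2⟩|⟨h1,h2⟩ <;> constructor <;>
          simp only [neg_sub] at * <;> nlinarith [abs_nonneg (w.re - z.re),
            le_abs_self (w.re - z.re), neg_abs_le (w.re - z.re)]
      calc |x - z.re| ≤ |w.re - z.re| := h1
        _ ≤ dist w z := hre
        _ < δ' := by linarith [hδ'pos]
    exact le_of_lt (by simpa [Complex.dist_eq] using hδ' hd1)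
  have bnd_v : ‖∫ s in z.im..w.im, (f (↑w.re + ↑s * I) - f z)‖ ≤ (ε/2) * |w.im - z.im| := by
    apply intervalIntegral.norm_integral_le_of_norm_le_const
    intro x hx
    have hx' : x ∈ Set.uIcc z.im w.im := Set.uIoc_subset_uIcc hx
    have hd1 : dist (↑w.re + ↑x * I) z < δ' := by
      have heq : dist (↑w.re + ↑x * I) z ≤ |w.re - z.re| + |x - z.im| := by
        rw [Complex.dist_eq]
        calc ‖(↑w.re + ↑x * I) - z‖
            ≤ |((↑w.re + ↑x * I) - z).re| + |((↑w.re + ↑x * I) - z).im| :=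
              Complex.norm_le_abs_re_add_abs_im _
          _ = |w.re - z.re| + |x - z.im| := by simp
      have h1 : |x - z.im| ≤ |w.im - z.im| := by
        rw [Set.mem_uIcc] at hx'
        rw [abs_le]; rw [abs_le] at *
        rcases hx' with ⟨h1,h2⟩|⟨h1,h2⟩ <;> constructor <;> nlinarith [le_abs_self (w.im - z.im),
          neg_abs_le (w.im - z.im)]
      calc dist (↑w.re + ↑x * I) z ≤ |w.re - z.re| + |x - z.im| := heq
        _ ≤ dist w z + dist w z := add_le_add hre (le_trans h1 him)
        _ < δ' := by linarith
    exact le_of_lt (by simpa [Complex.dist_eq] using hδ' hd1)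
  calc ‖(∫ t in z.re..w.re, (f (↑t + ↑z.im * I) - f z))
        + I * ∫ s in z.im..w.im, (f (↑w.re + ↑s * I) - f z)‖
      ≤ ‖∫ t in z.re..w.re, (f (↑t + ↑z.im * I) - f z)‖
        + ‖I * ∫ s in z.im..w.im, (f (↑w.re + ↑s * I) - f z)‖ := norm_add_le _ _
    _ = ‖∫ t in z.re..w.re, (f (↑t + ↑z.im * I) - f z)‖
        + ‖∫ s in z.im..w.im, (f (↑w.re + ↑s * I) - f z)‖ := by
          rw [norm_mul, Complex.norm_I, one_mul]
    _ ≤ (ε/2) * |w.re - z.re| + (ε/2) * |w.im - z.im| := add_le_add bnd_h bnd_v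
    _ ≤ (ε/2) * ‖w - z‖ + (ε/2) * ‖w - z‖ := by
        rw [dist_eq_norm] at hre him
        gcongr
    _ = ε * ‖w - z‖ := by ring

lemma ftc_path_segment {f F : ℂ → ℂ} {γ : ℝ → ℂ}
    (hγ : ContDiffOn ℝ 1 γ (Set.Icc 0 1)) {a b : ℝ}
    (h0a : 0 ≤ a) (hab : a ≤ b) (hb1 : b ≤ 1)
    (hF : ∀ t ∈ Set.Icc a b, HasDerivAt F (f (γ t)) (γ t))
    (hfγ : ContinuousOn (fun t => f (γ t)) (Set.Icc a b)) :
    ∫ t in a..b, f (γ t) * derivWithin γ (Set.Icc 0 1) t = F (γ b) - F (γ a) := by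
  have hsub : Set.Icc a b ⊆ Set.Icc (0:ℝ) 1 := Set.Icc_subset_Icc h0a hb1
  have hu : UniqueDiffOn ℝ (Set.Icc (0:ℝ) 1) := uniqueDiffOn_Icc (by norm_num)
  apply intervalIntegral.integral_eq_sub_of_hasDeriv_right_of_le hab
  · -- continuity of F ∘ γ
    intro x hx
    exact ((hF x hx).differentiableAt.continuousAt).comp_continuousWithinAt
      ((hγ.continuousOn.mono hsub) x hx)
  · -- derivative on the interior
    intro x hx
    have hx01 : x ∈ Set.Ioo (0:ℝ) 1 := ⟨lt_of_le_of_lt h0a hx.1, lt_of_lt_of_le hx.2 hb1⟩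
    have hγd : HasDerivWithinAt γ (derivWithin γ (Set.Icc 0 1) x) (Set.Icc (0:ℝ) 1) x :=
      ((hγ.differentiableOn one_ne_zero) x (hsub ⟨le_of_lt hx.1, le_of_lt hx.2⟩)).hasDerivWithinAt
    have hmem : Set.Icc (0:ℝ) 1 ∈ nhdsWithin x (Set.Ioi x) := by
      apply Filter.mem_of_superset (Ioc_mem_nhdsGT_of_mem ⟨le_rfl, hx01.2⟩)
      exact fun y hy => ⟨le_trans (le_of_lt hx01.1) (le_of_lt hy.1), hy.2⟩
    have hγd' : HasDerivWithinAt γ (derivWithin γ (Set.Icc 0 1) x) (Set.Ioi x) x :=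
      hγd.mono_of_mem_nhdsWithin hmem
    exact (hF x ⟨le_of_lt hx.1, le_of_lt hx.2⟩).comp_hasDerivWithinAt x hγd'
  · -- integrability
    apply ContinuousOn.intervalIntegrable_of_Icc hab
    exact hfγ.mul ((hγ.continuousOn_derivWithin hu le_rfl).mono hsub)

lemma primitive_sub_const {f F G : ℂ → ℂ} {S T : Set ℂ}
    (hS : Convex ℝ S) (hF : ∀ z ∈ T, HasDerivAt F (f z) z)
    (hG : ∀ z ∈ T, HasDerivAt G (f z) z) (hST : S ⊆ T) {x y : ℂ}
    (hx : x ∈ S) (hy : y ∈ S) (hSopen : IsOpen S) :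
    F x - G x = F y - G y := by
  have key : ∀ z ∈ S, HasDerivAt (fun w => F w - G w) 0 z := by
    intro z hz
    have := (hF z (hST hz)).sub (hG z (hST hz)); rwa [sub_self] at this
  have hdiff : DifferentiableOn ℂ (fun w => F w - G w) S :=
    fun z hz => ((key z hz).differentiableAt).differentiableWithinAt
  apply hS.is_const_of_fderivWithin_eq_zero (𝕜 := ℂ) hdiff _ hx hy
  intro z hz
  rw [fderivWithin_of_isOpen hSopen hz]
  have : deriv (fun w => F w - G w) z = 0 := (key z hz).deriv
  ext w
  simp only [ContinuousLinearMap.zero_apply]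
  have hD : HasFDerivAt (fun w => F w - G w)
      ((ContinuousLinearMap.smulRight (1 : ℂ →L[ℂ] ℂ) (0:ℂ))) z := (key z hz).hasFDerivAt
  rw [hD.fderiv]
  simp

set_option maxHeartbeats 1600000 in
/-- Gauss's anticipation of Cauchy's integral theorem: let `U ⊆ ℂ` be
open and simply connected, `f : ℂ → ℂ` complex differentiable at every point of `U`,
and `γ₀ γ₁ : [0,1] → ℂ` continuously differentiable paths with images in `U` and with
the same endpoints.  Then the two path integrals `∫_0^1 f(γ(t)) ⬝ γ'(t) dt` agree. -/
theorem gauss_cauchy_integral_theorem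
    (U : Set ℂ) (hUopen : IsOpen U) (hUsc : SimplyConnectedSpace U)
    (f : ℂ → ℂ) (hf : ∀ z ∈ U, DifferentiableAt ℂ f z)
    (γ₀ γ₁ : ℝ → ℂ)
    (hγ₀ : ContDiffOn ℝ 1 γ₀ (Set.Icc 0 1))
    (hγ₁ : ContDiffOn ℝ 1 γ₁ (Set.Icc 0 1))
    (hγ₀U : ∀ t ∈ Set.Icc (0:ℝ) 1, γ₀ t ∈ U)
    (hγ₁U : ∀ t ∈ Set.Icc (0:ℝ) 1, γ₁ t ∈ U)
    (hstart : γ₀ 0 = γ₁ 0) (hend : γ₀ 1 = γ₁ 1) :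
    (∫ t in (0:ℝ)..1, f (γ₀ t) * derivWithin γ₀ (Set.Icc 0 1) t) =
      ∫ t in (0:ℝ)..1, f (γ₁ t) * derivWithin γ₁ (Set.Icc 0 1) t := by
  have hfc : ContinuousOn f U := fun z hz => (hf z hz).continuousAt.continuousWithinAt
  have h0m : (0:ℝ) ∈ Set.Icc (0:ℝ) 1 := by norm_num
  have h1m : (1:ℝ) ∈ Set.Icc (0:ℝ) 1 := by norm_num
  -- the two paths as `Path`s in the subtype `U`
  have hcont₀ : Continuous fun t : unitInterval => (⟨γ₀ t, hγ₀U t t.2⟩ : U) :=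
    Continuous.subtype_mk
      (hγ₀.continuousOn.comp_continuous continuous_subtype_val (fun t => t.2)) _
  have hcont₁ : Continuous fun t : unitInterval => (⟨γ₁ t, hγ₁U t t.2⟩ : U) :=
    Continuous.subtype_mk
      (hγ₁.continuousOn.comp_continuous continuous_subtype_val (fun t => t.2)) _
  let p₀ : Path (⟨γ₀ 0, hγ₀U 0 h0m⟩ : U) (⟨γ₀ 1, hγ₀U 1 h1m⟩ : U) :=
    { toFun := fun t => ⟨γ₀ t, hγ₀U t t.2⟩
      continuous_toFun := hcont₀
      source' := by apply Subtype.ext; simp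
      target' := by apply Subtype.ext; simp }
  let p₁ : Path (⟨γ₀ 0, hγ₀U 0 h0m⟩ : U) (⟨γ₀ 1, hγ₀U 1 h1m⟩ : U) :=
    { toFun := fun t => ⟨γ₁ t, hγ₁U t t.2⟩
      continuous_toFun := hcont₁
      source' := by apply Subtype.ext; simp [hstart]
      target' := by apply Subtype.ext; simp [hend] }
  obtain ⟨H⟩ := SimplyConnectedSpace.paths_homotopic p₀ p₁
  set Hc : ℝ → ℝ → ℂ := fun s t =>
    ((H (Set.projIcc 0 1 zero_le_one s, Set.projIcc 0 1 zero_le_one t) : U) : ℂ) with hHcdef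
  have hHcont : Continuous fun p : ℝ × ℝ => Hc p.1 p.2 :=
    continuous_subtype_val.comp (H.continuous.comp
      ((continuous_projIcc.comp continuous_fst).prodMk (continuous_projIcc.comp continuous_snd)))
  have hH0 : ∀ t ∈ Set.Icc (0:ℝ) 1, Hc 0 t = γ₀ t := by
    intro t ht
    show ((H (Set.projIcc 0 1 zero_le_one 0, Set.projIcc 0 1 zero_le_one t) : U) : ℂ) = γ₀ t
    rw [Set.projIcc_of_mem zero_le_one h0m, Set.projIcc_of_mem zero_le_one ht]
    rw [show (⟨(0:ℝ), h0m⟩ : unitInterval) = 0 from rfl, H.apply_zero]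
    rfl
  have hH1 : ∀ t ∈ Set.Icc (0:ℝ) 1, Hc 1 t = γ₁ t := by
    intro t ht
    show ((H (Set.projIcc 0 1 zero_le_one 1, Set.projIcc 0 1 zero_le_one t) : U) : ℂ) = γ₁ t
    rw [Set.projIcc_of_mem zero_le_one h1m, Set.projIcc_of_mem zero_le_one ht]
    rw [show (⟨(1:ℝ), h1m⟩ : unitInterval) = 1 from rfl, H.apply_one]
    rfl
  have hHs0 : ∀ s : ℝ, Hc s 0 = γ₀ 0 := by
    intro s
    show ((H (Set.projIcc 0 1 zero_le_one s, Set.projIcc 0 1 zero_le_one 0) : U) : ℂ) = γ₀ 0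
    rw [Set.projIcc_of_mem zero_le_one h0m]
    rw [show (⟨(0:ℝ), h0m⟩ : unitInterval) = 0 from rfl,
      H.eq_fst _ (by norm_num)]
    rfl
  have hHs1 : ∀ s : ℝ, Hc s 1 = γ₀ 1 := by
    intro s
    show ((H (Set.projIcc 0 1 zero_le_one s, Set.projIcc 0 1 zero_le_one 1) : U) : ℂ) = γ₀ 1
    rw [Set.projIcc_of_mem zero_le_one h1m]
    rw [show (⟨(1:ℝ), h1m⟩ : unitInterval) = 1 from rfl,
      H.eq_fst _ (by norm_num)]
    rfl
  have hHU : ∀ s t : ℝ, Hc s t ∈ U := fun s t =>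
    (H (Set.projIcc 0 1 zero_le_one s, Set.projIcc 0 1 zero_le_one t)).2
  -- a uniform radius ρ around the image of the homotopy
  have hKcomp : IsCompact (Set.range fun p : unitInterval × unitInterval => ((H p : U) : ℂ)) :=
    isCompact_range (continuous_subtype_val.comp H.continuous)
  have hKU : (Set.range fun p : unitInterval × unitInterval => ((H p : U) : ℂ)) ⊆ U := by
    rintro _ ⟨p, rfl⟩; exact (H p).2
  obtain ⟨ρ, hρpos, hρ⟩ := hKcomp.exists_thickening_subset_open hUopen hKU
  have hball : ∀ s t : ℝ, Metric.ball (Hc s t) ρ ⊆ U := by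
    intro s t
    refine subset_trans ?_ hρ
    apply Metric.ball_subset_thickening
    exact Set.mem_range_self _
  -- uniform continuity and the grid size
  have hsqK : IsCompact ((Set.Icc (0:ℝ) 1) ×ˢ (Set.Icc (0:ℝ) 1)) :=
    isCompact_Icc.prod isCompact_Icc
  obtain ⟨η, hηpos, hη⟩ := Metric.uniformContinuousOn_iff.1
    (hsqK.uniformContinuousOn_of_continuous hHcont.continuousOn) (ρ/2) (by positivity)
  obtain ⟨n, hn⟩ := exists_nat_one_div_lt hηpos
  set N : ℕ := n + 1 with hNdef
  have hNpos : (0:ℝ) < N := by positivity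
  set T : ℕ → ℝ := fun j => j / N with hTdef
  have hT0 : T 0 = 0 := by simp [hTdef]
  have hTN : T N = 1 := by simp only [hTdef]; exact div_self hNpos.ne'
  have hTstep : ∀ j : ℕ, T (j+1) - T j = 1/N := by
    intro j; simp only [hTdef]; push_cast; field_simp; ring
  have hTmono : ∀ j : ℕ, T j ≤ T (j+1) := fun j => by
    have := hTstep j
    have : (0:ℝ) < 1/N := by positivity
    linarith [hTstep j]
  have hTmem : ∀ j : ℕ, j ≤ N → T j ∈ Set.Icc (0:ℝ) 1 := by
    intro j hj
    constructor
    · positivity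
    · rw [hTdef]
      rw [div_le_one hNpos]
      exact_mod_cast hj
  have hIccsub : ∀ i : ℕ, i < N → Set.Icc (T i) (T (i+1)) ⊆ Set.Icc (0:ℝ) 1 := by
    intro i hi
    exact Set.Icc_subset_Icc (hTmem i (le_of_lt hi)).1 (hTmem (i+1) hi).2
  -- each small square of the grid is mapped into a small complex square inside U
  have hsq_mem : ∀ i j : ℕ, i < N → j < N → ∀ s t : ℝ,
      s ∈ Set.Icc (T i) (T (i+1)) → t ∈ Set.Icc (T j) (T (j+1)) →
      Hc s t ∈ csq (Hc (T i) (T j)) (ρ/2) := by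
    intro i j hi hj s t hs ht
    have hsI : s ∈ Set.Icc (0:ℝ) 1 := hIccsub i hi hs
    have htI : t ∈ Set.Icc (0:ℝ) 1 := hIccsub j hj ht
    have hdist : dist ((s, t) : ℝ × ℝ) ((T i, T j) : ℝ × ℝ) < η := by
      rw [Prod.dist_eq]
      have h1 : dist s (T i) < η := by
        rw [Real.dist_eq, _root_.abs_of_nonneg (by linarith [hs.1])]
        calc s - T i ≤ T (i+1) - T i := by linarith [hs.2]
          _ = 1/N := hTstep i
          _ < η := by simp only [hNdef]; push_cast; exact_mod_cast hn
      have h2 : dist t (T j) < η := by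
        rw [Real.dist_eq, _root_.abs_of_nonneg (by linarith [ht.1])]
        calc t - T j ≤ T (j+1) - T j := by linarith [ht.2]
          _ = 1/N := hTstep j
          _ < η := by simp only [hNdef]; push_cast; exact_mod_cast hn
      exact max_lt h1 h2
    have hd2 := hη (s, t) (Set.mk_mem_prod hsI htI) (T i, T j)
      (Set.mk_mem_prod (hTmem i (le_of_lt hi)) (hTmem j (le_of_lt hj))) hdist
    have habs : ‖Hc s t - Hc (T i) (T j)‖ < ρ/2 := by
      rw [← Complex.dist_eq]; exact hd2
    rw [mem_csq]
    constructor
    · exact lt_of_le_of_lt (by simpa using Complex.abs_re_le_norm (Hc s t - Hc (T i) (T j))) habs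
    · exact lt_of_le_of_lt (by simpa using Complex.abs_im_le_norm (Hc s t - Hc (T i) (T j))) habs
  have hSU : ∀ i j : ℕ, csq (Hc (T i) (T j)) (ρ/2) ⊆ U := by
    intro i j w hw
    apply hball (T i) (T j)
    rw [Metric.mem_ball, Complex.dist_eq]
    rw [mem_csq] at hw
    calc ‖w - Hc (T i) (T j)‖
        ≤ |(w - Hc (T i) (T j)).re| + |(w - Hc (T i) (T j)).im| :=
          Complex.norm_le_abs_re_add_abs_im _
      _ = |w.re - (Hc (T i) (T j)).re| + |w.im - (Hc (T i) (T j)).im| := by simp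
      _ < ρ/2 + ρ/2 := add_lt_add hw.1 hw.2
      _ = ρ := by ring
  -- choose primitives on each small square
  have hexF : ∀ i j : ℕ, ∃ Fij : ℂ → ℂ,
      ∀ w ∈ csq (Hc (T i) (T j)) (ρ/2), HasDerivAt Fij (f w) w :=
    fun i j => exists_primitive_csq (by positivity) (fun w hw => hf w (hSU i j hw))
  choose F hF using hexF
  set R : ℕ → ℝ → ℂ := fun i s =>
    ∑ j ∈ Finset.range N, (F i j (Hc s (T (j+1))) - F i j (Hc s (T j))) with hRdef
  -- rows are constant
  have hrow : ∀ i, i < N → ∀ s ∈ Set.Icc (T i) (T (i+1)), ∀ s' ∈ Set.Icc (T i) (T (i+1)),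
      R i s = R i s' := by
    intro i hi s hs s' hs'
    have hstep : ∀ j, j + 1 < N →
        F i j (Hc s (T (j+1))) - F i j (Hc s' (T (j+1)))
          = F i (j+1) (Hc s (T (j+1))) - F i (j+1) (Hc s' (T (j+1))) := by
      intro j hj1
      have hjN : j < N := Nat.lt_of_succ_lt hj1
      have hx : Hc s (T (j+1)) ∈ csq (Hc (T i) (T j)) (ρ/2) ∩ csq (Hc (T i) (T (j+1))) (ρ/2) :=
        ⟨hsq_mem i j hi hjN s (T (j+1)) hs ⟨hTmono j, le_rfl⟩,
         hsq_mem i (j+1) hi hj1 s (T (j+1)) hs ⟨le_rfl, hTmono (j+1)⟩⟩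
      have hy : Hc s' (T (j+1)) ∈ csq (Hc (T i) (T j)) (ρ/2) ∩ csq (Hc (T i) (T (j+1))) (ρ/2) :=
        ⟨hsq_mem i j hi hjN s' (T (j+1)) hs' ⟨hTmono j, le_rfl⟩,
         hsq_mem i (j+1) hi hj1 s' (T (j+1)) hs' ⟨le_rfl, hTmono (j+1)⟩⟩
      have hconst := primitive_sub_const (f := f)
        (((csq_convex _ _).inter (csq_convex _ _)))
        (fun w hw => hF i j w hw.1) (fun w hw => hF i (j+1) w hw.2)
        subset_rfl hx hy ((csq_isOpen _ _).inter (csq_isOpen _ _))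
      linear_combination hconst
    have hends0 : Hc s 0 = Hc s' 0 := by rw [hHs0, hHs0]
    have hends1 : Hc s 1 = Hc s' 1 := by rw [hHs1, hHs1]
    have key : (∑ j ∈ Finset.range N, (F i j (Hc s (T (j+1))) - F i j (Hc s' (T (j+1)))))
        = ∑ j ∈ Finset.range N, (F i j (Hc s (T j)) - F i j (Hc s' (T j))) := by
      rw [hNdef, Finset.sum_range_succ, Finset.sum_range_succ']
      have hlast : F i n (Hc s (T (n+1))) - F i n (Hc s' (T (n+1))) = 0 := by
        rw [show T (n+1) = 1 from hTN, hends1, sub_self]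
      have hfirst : F i 0 (Hc s (T 0)) - F i 0 (Hc s' (T 0)) = 0 := by
        rw [hT0, hends0, sub_self]
      rw [hlast, hfirst, add_zero, add_zero]
      apply Finset.sum_congr rfl
      intro j hj
      rw [Finset.mem_range] at hj
      exact hstep j (by omega)
    have hdiff : R i s - R i s'
        = (∑ j ∈ Finset.range N, (F i j (Hc s (T (j+1))) - F i j (Hc s' (T (j+1)))))
          - ∑ j ∈ Finset.range N, (F i j (Hc s (T j)) - F i j (Hc s' (T j))) := by
      simp only [hRdef, ← Finset.sum_sub_distrib]
      apply Finset.sum_congr rfl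
      intros; ring
    have : R i s - R i s' = 0 := by rw [hdiff, key, sub_self]
    exact sub_eq_zero.mp this
  -- adjacent rows agree at the common time
  have hcol : ∀ i : ℕ, i + 1 < N → R i (T (i+1)) = R (i+1) (T (i+1)) := by
    intro i hi1
    have hiN : i < N := Nat.lt_of_succ_lt hi1
    simp only [hRdef]
    apply Finset.sum_congr rfl
    intro j hj
    rw [Finset.mem_range] at hj
    have hx : Hc (T (i+1)) (T (j+1)) ∈
        csq (Hc (T i) (T j)) (ρ/2) ∩ csq (Hc (T (i+1)) (T j)) (ρ/2) :=
      ⟨hsq_mem i j hiN hj _ _ ⟨hTmono i, le_rfl⟩ ⟨hTmono j, le_rfl⟩,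
       hsq_mem (i+1) j hi1 hj _ _ ⟨le_rfl, hTmono (i+1)⟩ ⟨hTmono j, le_rfl⟩⟩
    have hy : Hc (T (i+1)) (T j) ∈
        csq (Hc (T i) (T j)) (ρ/2) ∩ csq (Hc (T (i+1)) (T j)) (ρ/2) :=
      ⟨hsq_mem i j hiN hj _ _ ⟨hTmono i, le_rfl⟩ ⟨le_rfl, hTmono j⟩,
       hsq_mem (i+1) j hi1 hj _ _ ⟨le_rfl, hTmono (i+1)⟩ ⟨le_rfl, hTmono j⟩⟩
    have hconst := primitive_sub_const (f := f)
      ((csq_convex _ _).inter (csq_convex _ _))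
      (fun w hw => hF i j w hw.1) (fun w hw => hF (i+1) j w hw.2)
      subset_rfl hx hy ((csq_isOpen _ _).inter (csq_isOpen _ _))
    linear_combination hconst
  -- continuity of the integrands
  have hγcont₀ : ContinuousOn (fun t => f (γ₀ t)) (Set.Icc (0:ℝ) 1) :=
    hfc.comp hγ₀.continuousOn hγ₀U
  have hγcont₁ : ContinuousOn (fun t => f (γ₁ t)) (Set.Icc (0:ℝ) 1) :=
    hfc.comp hγ₁.continuousOn hγ₁U
  have hu : UniqueDiffOn ℝ (Set.Icc (0:ℝ) 1) := uniqueDiffOn_Icc (by norm_num)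
  have hint₀ : ContinuousOn (fun t => f (γ₀ t) * derivWithin γ₀ (Set.Icc 0 1) t)
      (Set.Icc (0:ℝ) 1) := hγcont₀.mul (hγ₀.continuousOn_derivWithin hu le_rfl)
  have hint₁ : ContinuousOn (fun t => f (γ₁ t) * derivWithin γ₁ (Set.Icc 0 1) t)
      (Set.Icc (0:ℝ) 1) := hγcont₁.mul (hγ₁.continuousOn_derivWithin hu le_rfl)
  -- splitting the two integrals along the grid
  have hsplit₀ : (∫ t in (0:ℝ)..1, f (γ₀ t) * derivWithin γ₀ (Set.Icc 0 1) t)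
      = ∑ j ∈ Finset.range N, ∫ t in (T j)..(T (j+1)),
          f (γ₀ t) * derivWithin γ₀ (Set.Icc 0 1) t := by
    have h := intervalIntegral.sum_integral_adjacent_intervals (μ := volume) (a := T) (n := N)
      (f := fun t => f (γ₀ t) * derivWithin γ₀ (Set.Icc 0 1) t)
      (fun k hk => by
        apply ContinuousOn.intervalIntegrable
        apply hint₀.mono
        rw [Set.uIcc_of_le (hTmono k)]
        exact hIccsub k hk)
    rw [hT0, hTN] at h
    exact h.symm
  have hsplit₁ : (∫ t in (0:ℝ)..1, f (γ₁ t) * derivWithin γ₁ (Set.Icc 0 1) t)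
      = ∑ j ∈ Finset.range N, ∫ t in (T j)..(T (j+1)),
          f (γ₁ t) * derivWithin γ₁ (Set.Icc 0 1) t := by
    have h := intervalIntegral.sum_integral_adjacent_intervals (μ := volume) (a := T) (n := N)
      (f := fun t => f (γ₁ t) * derivWithin γ₁ (Set.Icc 0 1) t)
      (fun k hk => by
        apply ContinuousOn.intervalIntegrable
        apply hint₁.mono
        rw [Set.uIcc_of_le (hTmono k)]
        exact hIccsub k hk)
    rw [hT0, hTN] at h
    exact h.symm
  have hNpos' : 0 < N := Nat.succ_pos n
  -- bottom row equals the first integral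
  have hbot : (∫ t in (0:ℝ)..1, f (γ₀ t) * derivWithin γ₀ (Set.Icc 0 1) t) = R 0 (T 0) := by
    rw [hsplit₀]
    simp only [hRdef]
    apply Finset.sum_congr rfl
    intro j hj
    rw [Finset.mem_range] at hj
    have hjmem : ∀ t ∈ Set.Icc (T j) (T (j+1)), γ₀ t ∈ csq (Hc (T 0) (T j)) (ρ/2) := by
      intro t ht
      have h := hsq_mem 0 j hNpos' hj (T 0) t ⟨le_rfl, hTmono 0⟩ ht
      rw [hT0] at h
      rw [hH0 t (hIccsub j hj ht)] at h
      rw [hT0]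
      exact h
    rw [ftc_path_segment hγ₀ (hTmem j (le_of_lt hj)).1 (hTmono j) (hTmem (j+1) hj).2
      (fun t ht => hF 0 j (γ₀ t) (hjmem t ht))
      (hγcont₀.mono (hIccsub j hj))]
    rw [hT0, hH0 (T (j+1)) (hTmem (j+1) hj), hH0 (T j) (hTmem j (le_of_lt hj))]
  have hTn1 : T (n+1) = 1 := by rw [← hNdef]; exact hTN
  -- top row equals the second integral
  have htop : (∫ t in (0:ℝ)..1, f (γ₁ t) * derivWithin γ₁ (Set.Icc 0 1) t) = R n 1 := by
    have hnN : n < N := Nat.lt_succ_self n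
    have h1mem : (1:ℝ) ∈ Set.Icc (T n) (T (n+1)) := ⟨hTn1 ▸ hTmono n, hTn1.ge⟩
    rw [hsplit₁]
    simp only [hRdef]
    apply Finset.sum_congr rfl
    intro j hj
    rw [Finset.mem_range] at hj
    have hjmem : ∀ t ∈ Set.Icc (T j) (T (j+1)), γ₁ t ∈ csq (Hc (T n) (T j)) (ρ/2) := by
      intro t ht
      have h := hsq_mem n j hnN hj 1 t h1mem ht
      rwa [hH1 t (hIccsub j hj ht)] at h
    rw [ftc_path_segment hγ₁ (hTmem j (le_of_lt hj)).1 (hTmono j) (hTmem (j+1) hj).2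
      (fun t ht => hF n j (γ₁ t) (hjmem t ht))
      (hγcont₁.mono (hIccsub j hj))]
    rw [hH1 (T (j+1)) (hTmem (j+1) hj), hH1 (T j) (hTmem j (le_of_lt hj))]
  -- chain across the rows
  have hchain : ∀ i : ℕ, i < N → R i (T (i+1)) = R 0 (T 0) := by
    intro i
    induction i with
    | zero => intro h; exact hrow 0 h (T 1) ⟨hTmono 0, le_rfl⟩ (T 0) ⟨le_rfl, hTmono 0⟩
    | succ k ih =>
      intro h
      have h1 : R (k+1) (T (k+2)) = R (k+1) (T (k+1)) :=
        hrow (k+1) h (T (k+2)) ⟨hTmono (k+1), le_rfl⟩ (T (k+1)) ⟨le_rfl, hTmono (k+1)⟩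
      have h2 := hcol k h
      rw [h1, ← h2, ih (Nat.lt_of_succ_lt h)]
  calc (∫ t in (0:ℝ)..1, f (γ₀ t) * derivWithin γ₀ (Set.Icc 0 1) t)
      = R 0 (T 0) := hbot
    _ = R n (T (n+1)) := (hchain n (Nat.lt_succ_self n)).symm
    _ = R n 1 := by rw [hTn1]
    _ = ∫ t in (0:ℝ)..1, f (γ₁ t) * derivWithin γ₁ (Set.Icc 0 1) t := htop.symm
end
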